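/- arXiv:1803.10493 — 2 statements merged into one kernel-verified Lean document; each statement's English description precedes it below -/
import Mathlib

section
/- Let X be a locally compact topological space and (Y,d) a boundedly compact metric space. A subset E of LB(X,Y) is compact in the topology of uniform convergence on compact sets if and only if E is closed in (LB(X,Y), τ_UC), pointwise bounded, and finitely equicontinuous. -/
open Set Filter Topology Metric Bornology UniformConvergence

/-- Finite equicontinuity of a family `E` at a point `x`. -/
def FinEquicontAt {X Y : Type*} [TopologicalSpace X] [MetricSpace Y]
    (E : Set (X → Y)) (x : X) : Prop :=
  ∀ ε > (0 : ℝ), ∃ 𝓑 : Finset (Set X), ⋃₀ (𝓑 : Set (Set X)) ∈ 𝓝 x ∧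
    ∀ f ∈ E, ∀ B ∈ 𝓑, ∀ p ∈ B, ∀ q ∈ B, dist (f p) (f q) < ε

/-- Finite equicontinuity of a family `E`. -/
def FinEquicont {X Y : Type*} [TopologicalSpace X] [MetricSpace Y]
    (E : Set (X → Y)) : Prop :=
  ∀ x : X, FinEquicontAt E x

/-- A function is locally bounded if every point has an open neighbourhood with bounded image. -/
def LocBounded {X Y : Type*} [TopologicalSpace X] [MetricSpace Y] (f : X → Y) : Prop :=
  ∀ x : X, ∃ U : Set X, IsOpen U ∧ x ∈ U ∧ IsBounded (f '' U)

/-!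
A locally bounded map into a proper space has precompact image near every point, so it splits a
neighbourhood of each point into finitely many pieces of small oscillation; hence so does every
finite family of them. If `E` is compact for `τ_UC`, approximating `E` uniformly on a compact
neighbourhood of `x` by a finite subfamily gives finite equicontinuity.

Conversely, finite equicontinuity covers a compact `K` by finitely many pieces on which every
`f ∈ E` oscillates by less than `ε`; choosing a point `s` in each piece reduces uniform closeness
on `K` to closeness at the finitely many `s`, where pointwise boundedness in a proper space gives
total boundedness. The same reduction shows that `E` is uniformly bounded on compact sets, so every
`τ_UC`-limit of `E` is locally bounded; closedness in `LB(X, Y)` is then closedness in the whole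
space, which is complete.
-/

theorem IsClosed.of_isClosed_preimage_val {α : Type*} [TopologicalSpace α] {p : α → Prop}
    {s : Set α} (hs : IsClosed (Subtype.val ⁻¹' s : Set {a // p a}))
    (hcl : closure s ⊆ {a | p a}) : IsClosed s := by
  refine isClosed_of_closure_subset fun a ha => ?_
  have hval : Subtype.val '' (Subtype.val ⁻¹' s : Set {a // p a}) = s := by
    rw [image_preimage_eq_range_inter, Subtype.range_coe_subtype]
    exact inter_eq_right.2 (subset_closure.trans hcl)
  have hmem : (⟨a, hcl ha⟩ : {a // p a}) ∈ closure (Subtype.val ⁻¹' s) := by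
    rw [closure_subtype, hval]
    exact ha
  exact hs.closure_subset hmem

section FinEquicont

variable {X Y : Type*} [TopologicalSpace X] [MetricSpace Y]

theorem finEquicontAt_empty (x : X) : FinEquicontAt (∅ : Set (X → Y)) x :=
  fun _ _ => ⟨{univ}, by simp, by simp⟩

theorem FinEquicontAt.union {E F : Set (X → Y)} {x : X} (hE : FinEquicontAt E x)
    (hF : FinEquicontAt F x) : FinEquicontAt (E ∪ F) x := by
  classical
  intro ε hε
  obtain ⟨𝓑₁, hU₁, hosc₁⟩ := hE ε hε
  obtain ⟨𝓑₂, hU₂, hosc₂⟩ := hF ε hε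
  refine ⟨Finset.image₂ (· ∩ ·) 𝓑₁ 𝓑₂, mem_of_superset (inter_mem hU₁ hU₂) ?_, ?_⟩
  · rintro p ⟨⟨A, hA, hpA⟩, ⟨B, hB, hpB⟩⟩
    exact ⟨A ∩ B, by simpa using ⟨A, hA, B, hB, rfl⟩, hpA, hpB⟩
  · intro f hf C hC p hp q hq
    obtain ⟨A, hA, B, hB, rfl⟩ := Finset.mem_image₂.1 hC
    rcases hf with hf | hf
    · exact hosc₁ f hf A hA p hp.1 q hq.1
    · exact hosc₂ f hf B hB p hp.2 q hq.2

theorem LocBounded.finEquicontAt_singleton [ProperSpace Y] {f : X → Y} (hf : LocBounded f)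
    (x : X) : FinEquicontAt {f} x := by
  classical
  intro ε hε
  obtain ⟨U, hUo, hxU, hUb⟩ := hf x
  obtain ⟨c, hc, hcov⟩ := totallyBounded_iff.1
    (hUb.isCompact_closure.totallyBounded.subset subset_closure) (ε / 2) (half_pos hε)
  refine ⟨hc.toFinset.image fun y => U ∩ f ⁻¹' ball y (ε / 2),
    mem_of_superset (hUo.mem_nhds hxU) fun p hp => ?_, ?_⟩
  · obtain ⟨y, hy, hpy⟩ := mem_iUnion₂.1 (hcov ⟨p, hp, rfl⟩)
    exact ⟨U ∩ f ⁻¹' ball y (ε / 2), by simpa using ⟨y, hy, rfl⟩, hp, hpy⟩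
  · intro g hg B hB p hp q hq
    rw [mem_singleton_iff.1 hg]
    obtain ⟨y, -, rfl⟩ := Finset.mem_image.1 hB
    calc dist (f p) (f q) ≤ dist (f p) y + dist (f q) y := dist_triangle_right _ _ _
      _ < ε / 2 + ε / 2 := add_lt_add hp.2 hq.2
      _ = ε := add_halves ε

theorem Set.Finite.finEquicontAt [ProperSpace Y] {E : Set (X → Y)} (hE : E.Finite)
    (hb : ∀ f ∈ E, LocBounded f) (x : X) : FinEquicontAt E x := by
  induction E, hE using Set.Finite.induction_on with
  | empty => exact finEquicontAt_empty x
  | @insert f E _ _ ih =>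
    rw [insert_eq]
    exact ((hb f (mem_insert f E)).finEquicontAt_singleton x).union
      (ih fun g hg => hb g (mem_insert_of_mem f hg))

theorem finEquicontAt_of_forall_approx {E : Set (X → Y)} {x : X}
    (h : ∀ ε > 0, ∃ F : Set (X → Y), FinEquicontAt F x ∧ ∃ K ∈ 𝓝 x,
      ∀ f ∈ E, ∃ g ∈ F, ∀ z ∈ K, dist (f z) (g z) < ε) :
    FinEquicontAt E x := by
  classical
  intro ε hε
  obtain ⟨F, hF, K, hK, happrox⟩ := h (ε / 3) (by positivity)
  obtain ⟨𝓑, hU, hosc⟩ := hF (ε / 3) (by positivity)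
  refine ⟨𝓑.image (· ∩ K), mem_of_superset (inter_mem hU hK) ?_, ?_⟩
  · rintro p ⟨⟨B, hB, hpB⟩, hpK⟩
    exact ⟨B ∩ K, by simpa using ⟨B, hB, rfl⟩, hpB, hpK⟩
  · intro f hf C hC p hp q hq
    obtain ⟨B, hB, rfl⟩ := Finset.mem_image.1 hC
    obtain ⟨g, hg, hfg⟩ := happrox f hf
    calc dist (f p) (f q) ≤ dist (f p) (g p) + dist (g p) (g q) + dist (g q) (f q) :=
          dist_triangle4 _ _ _ _
      _ < ε / 3 + ε / 3 + ε / 3 := by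
          gcongr
          exacts [hfg p hp.2, hosc g hg B hB p hp.1 q hq.1, dist_comm (f q) _ ▸ hfg q hq.2]
      _ = ε := by ring

theorem FinEquicont.exists_finset_forall_dist_lt {E : Set (X → Y)} (h : FinEquicont E)
    {K : Set X} (hK : IsCompact K) {ε : ℝ} (hε : 0 < ε) :
    ∃ S : Finset X, ∀ p ∈ K, ∃ s ∈ S, ∀ f ∈ E, dist (f p) (f s) < ε := by
  classical
  choose 𝓑 hU hosc using fun y => h y ε hε
  obtain ⟨t, -, hcov⟩ :=
    hK.elim_nhds_subcover (fun y => ⋃₀ (𝓑 y : Set (Set X))) fun y _ => hU y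
  let 𝓒 := (t.biUnion 𝓑).filter (·.Nonempty)
  refine ⟨𝓒.attach.image fun B => (Finset.mem_filter.1 B.2).2.some, fun p hp => ?_⟩
  obtain ⟨y, hy, B, hB, hpB⟩ := mem_iUnion₂.1 (hcov hp)
  have hB𝓒 : B ∈ 𝓒 := Finset.mem_filter.2 ⟨Finset.mem_biUnion.2 ⟨y, hy, hB⟩, ⟨p, hpB⟩⟩
  exact ⟨_, Finset.mem_image_of_mem _ (Finset.mem_attach _ ⟨B, hB𝓒⟩),
    fun f hf => hosc y f hf B hB p hpB _ (Finset.mem_filter.1 hB𝓒).2.some_mem⟩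

theorem FinEquicont.isBounded_biUnion_image {E : Set (X → Y)}
    (hb : ∀ x, IsBounded ((fun f => f x) '' E)) (h : FinEquicont E) {K : Set X}
    (hK : IsCompact K) : IsBounded (⋃ f ∈ E, f '' K) := by
  obtain ⟨S, hS⟩ := h.exists_finset_forall_dist_lt hK one_pos
  refine (((isBounded_biUnion_finset S).2 fun s _ => hb s).thickening (δ := 1)).subset ?_
  intro y hy
  obtain ⟨f, hf, p, hp, rfl⟩ := mem_iUnion₂.1 hy
  obtain ⟨s, hs, hps⟩ := hS p hp
  exact mem_thickening_iff.2 ⟨f s, mem_iUnion₂.2 ⟨s, hs, f, hf, rfl⟩, hps f hf⟩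

theorem FinEquicont.exists_finite_approx [ProperSpace Y] {E : Set (X → Y)}
    (hb : ∀ x, IsBounded ((fun f => f x) '' E)) (h : FinEquicont E) {K : Set X}
    (hK : IsCompact K) {ε : ℝ} (hε : 0 < ε) :
    ∃ t ⊆ E, t.Finite ∧ ∀ f ∈ E, ∃ g ∈ t, ∀ p ∈ K, dist (f p) (g p) < ε := by
  obtain ⟨S, hS⟩ := h.exists_finset_forall_dist_lt hK (by positivity : 0 < ε / 3)
  let Φ : (X → Y) → S → Y := fun f s => f s
  have hΦ : IsBounded (Φ '' E) := by
    refine (isBounded_pi (S := fun s : S => (fun f => f s) '' E) |>.2 <| .inr fun s => hb s).subset ?_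
    rintro _ ⟨f, hf, rfl⟩ s -
    exact ⟨f, hf, rfl⟩
  obtain ⟨t, htE, ht, hcov⟩ := exists_subset_image_finite_and.1 <|
    finite_approx_of_totallyBounded (hΦ.isCompact_closure.totallyBounded.subset subset_closure)
      (ε / 3) (by positivity)
  refine ⟨t, htE, ht, fun f hf => ?_⟩
  obtain ⟨g, hg, hfg⟩ := mem_iUnion₂.1 (biUnion_image ▸ hcov (mem_image_of_mem Φ hf))
  refine ⟨g, hg, fun p hp => ?_⟩
  obtain ⟨s, hs, hps⟩ := hS p hp
  calc dist (f p) (g p) ≤ dist (f p) (f s) + dist (f s) (g s) + dist (g s) (g p) :=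
        dist_triangle4 _ _ _ _
    _ < ε / 3 + ε / 3 + ε / 3 := by
        gcongr
        exacts [hps f hf, (dist_le_pi_dist (Φ f) (Φ g) ⟨s, hs⟩).trans_lt hfg,
          dist_comm (g p) _ ▸ hps g (htE hg)]
    _ = ε := by ring

end FinEquicont

namespace UniformOnFun

variable {X Y : Type*} [TopologicalSpace X] [MetricSpace Y]

theorem finEquicontAt_of_totallyBounded [ProperSpace Y] {𝔖 : Set (Set X)}
    {E : Set (X →ᵤ[𝔖] Y)} (hE : TotallyBounded E) (hb : ∀ f ∈ E, LocBounded (toFun 𝔖 f))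
    {x : X} {K : Set X} (hK𝔖 : K ∈ 𝔖) (hKx : K ∈ 𝓝 x) : FinEquicontAt (toFun 𝔖 '' E) x := by
  refine finEquicontAt_of_forall_approx fun ε hε => ?_
  obtain ⟨t, htE, ht, hcov⟩ := totallyBounded_iff_subset.1 hE _
    (UniformOnFun.gen_mem_uniformity _ _ hK𝔖 (dist_mem_uniformity hε))
  refine ⟨toFun 𝔖 '' t, (ht.image _).finEquicontAt
    (forall_mem_image.2 fun f hf => hb f (htE hf)) x, K, hKx, ?_⟩
  rintro _ ⟨f, hf, rfl⟩
  obtain ⟨g, hg, hfg⟩ := mem_iUnion₂.1 (hcov hf)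
  exact ⟨_, mem_image_of_mem _ hg, hfg⟩

theorem totallyBounded_of_finEquicont [ProperSpace Y]
    {E : Set (X →ᵤ[{K : Set X | IsCompact K}] Y)}
    (hb : ∀ x, IsBounded ((fun f => f x) '' (toFun _ '' E))) (h : FinEquicont (toFun _ '' E)) :
    TotallyBounded E := by
  have hdir : DirectedOn (· ⊆ ·) {K : Set X | IsCompact K} := fun K₁ h₁ K₂ h₂ =>
    ⟨K₁ ∪ K₂, h₁.union h₂, subset_union_left, subset_union_right⟩
  refine (UniformOnFun.hasBasis_uniformity X Y _ ⟨∅, isCompact_empty⟩ hdir).totallyBounded_iff.2 ?_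
  rintro ⟨K, V⟩ ⟨hK, hV⟩
  obtain ⟨ε, hε, hεV⟩ := mem_uniformity_dist.1 hV
  obtain ⟨t, htE, ht, happrox⟩ := h.exists_finite_approx hb hK hε
  obtain ⟨u, huE, rfl⟩ := subset_image_iff.1 htE
  refine ⟨u, ht.of_finite_image (toFun _).injective.injOn, fun f hf => ?_⟩
  obtain ⟨_, ⟨g, hg, rfl⟩, hfg⟩ := happrox _ (mem_image_of_mem _ hf)
  exact mem_iUnion₂.2 ⟨g, hg, fun p hp => hεV (hfg p hp)⟩

theorem locBounded_of_mem_closure [LocallyCompactSpace X]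
    {E : Set (X →ᵤ[{K : Set X | IsCompact K}] Y)}
    (hE : ∀ K, IsCompact K → IsBounded (⋃ f ∈ toFun _ '' E, f '' K)) {g : X →ᵤ[_] Y}
    (hg : g ∈ closure E) : LocBounded (toFun _ g) := by
  intro x
  obtain ⟨K, hK, hKx⟩ := exists_compact_mem_nhds x
  obtain ⟨f, hfg, hf⟩ := mem_closure_iff_nhds.1 hg _
    (UniformOnFun.gen_mem_nhds _ _ g hK (dist_mem_uniformity one_pos))
  refine ⟨interior K, isOpen_interior, mem_interior_iff_mem_nhds.2 hKx,
    ((hE K hK).thickening (δ := 1)).subset ?_⟩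
  rintro _ ⟨p, hp, rfl⟩
  exact mem_thickening_iff.2 ⟨toFun _ f p,
    mem_iUnion₂.2 ⟨_, mem_image_of_mem _ hf, p, interior_subset hp, rfl⟩,
    hfg p (interior_subset hp)⟩

end UniformOnFun

theorem stmt7 {X Y : Type*} [TopologicalSpace X] [LocallyCompactSpace X]
    [MetricSpace Y] [ProperSpace Y]
    (E : Set (X →ᵤ[{K : Set X | IsCompact K}] Y))
    (hE : ∀ f ∈ E, LocBounded (UniformOnFun.toFun {K : Set X | IsCompact K} f)) :
    IsCompact E ↔
      (IsClosed ((Subtype.val ⁻¹' E) :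
          Set {f : X →ᵤ[{K : Set X | IsCompact K}] Y //
            LocBounded (UniformOnFun.toFun {K : Set X | IsCompact K} f)}) ∧
        (∀ x : X, IsBounded
          ((fun f : X →ᵤ[{K : Set X | IsCompact K}] Y =>
            UniformOnFun.toFun {K : Set X | IsCompact K} f x) '' E)) ∧
        FinEquicont ((UniformOnFun.toFun {K : Set X | IsCompact K}) '' E)) := by
  have : T2Space (X →ᵤ[{K : Set X | IsCompact K}] Y) := UniformOnFun.t2Space_of_covering <|
    sUnion_eq_univ_iff.2 fun x => ⟨{x}, isCompact_singleton, rfl⟩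
  constructor
  · intro hc
    refine ⟨hc.isClosed.preimage continuous_subtype_val, fun x => ?_, fun x => ?_⟩
    · exact (hc.image (UniformOnFun.uniformContinuous_eval_of_mem Y _
        (mem_singleton x) isCompact_singleton).continuous).isBounded
    · obtain ⟨K, hK, hKx⟩ := exists_compact_mem_nhds x
      exact UniformOnFun.finEquicontAt_of_totallyBounded hc.totallyBounded hE hK hKx
  · rintro ⟨hclosed, hb, heq⟩
    have hb' : ∀ x, IsBounded ((fun f => f x) '' (UniformOnFun.toFun _ '' E)) := by
      simpa only [image_image] using hb
    have hEc : IsClosed E := hclosed.of_isClosed_preimage_val fun _ hg =>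
      UniformOnFun.locBounded_of_mem_closure (fun _ hK => heq.isBounded_biUnion_image hb' hK) hg
    exact isCompact_iff_totallyBounded_isComplete.2
      ⟨UniformOnFun.totallyBounded_of_finEquicont hb' heq, hEc.isComplete⟩
end

section
/- Let X be a compact topological space. If (f_n) is a sequence of upper semicontinuous functions from X to ℝ that is uniformly bounded and finitely equicontinuous, then there is a subsequence (f_{n_k}) converging uniformly on X, and the limit function is upper semicontinuous. -/
open Set Filter Topology Metric Bornology

/-!
Compactness and finite equicontinuity give, for every `ε > 0`, a finite set `T ⊆ X` such that every
point of `X` is `ε`-close to a point of `T` simultaneously for all `f_n`. An ultrafilter on the family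
is Cauchy at each of the finitely many points of `T` (the values are bounded), hence uniformly Cauchy.
So the family is totally bounded in the complete space `X →ᵤ ℝ` of uniform convergence, and a
subsequence converges uniformly; upper semicontinuity passes to uniform limits.
-/

open scoped UniformConvergence

section
variable {X Y : Type*} [TopologicalSpace X] [MetricSpace Y] [CompactSpace X] {E : Set (X → Y)}

theorem FinEquicont.exists_finite_cover (hE : FinEquicont E) {ε : ℝ} (hε : 0 < ε) :
    ∃ 𝓒 : Finset (Set X), (∀ x, ∃ B ∈ 𝓒, x ∈ B) ∧
      ∀ f ∈ E, ∀ B ∈ 𝓒, ∀ p ∈ B, ∀ q ∈ B, dist (f p) (f q) < ε := by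
  classical
  choose 𝓑 h𝓑 hosc using fun x => hE x ε hε
  obtain ⟨t, -, ht⟩ := isCompact_univ.elim_nhds_subcover _ fun x _ => h𝓑 x
  refine ⟨t.biUnion 𝓑, fun x => ?_, fun f hf B hB => ?_⟩
  · obtain ⟨y, hy, B, hB, hxB⟩ : ∃ y ∈ t, ∃ B ∈ 𝓑 y, x ∈ B := by
      simpa using ht (mem_univ x)
    exact ⟨B, Finset.mem_biUnion.2 ⟨y, hy, hB⟩, hxB⟩
  · obtain ⟨y, -, hB⟩ := Finset.mem_biUnion.1 hB
    exact hosc y f hf B hB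

theorem FinEquicont.exists_finite_net (hE : FinEquicont E) {ε : ℝ} (hε : 0 < ε) :
    ∃ T : Set X, T.Finite ∧ ∀ x, ∃ t ∈ T, ∀ f ∈ E, dist (f x) (f t) < ε := by
  rcases isEmpty_or_nonempty X with hX | hX
  · exact ⟨∅, finite_empty, isEmptyElim⟩
  obtain ⟨𝓒, hcov, hosc⟩ := hE.exists_finite_cover hε
  refine ⟨(fun B => Classical.epsilon (· ∈ B)) '' (𝓒 : Set (Set X)), 𝓒.finite_toSet.image _,
    fun x => ?_⟩
  obtain ⟨B, hB, hxB⟩ := hcov x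
  exact ⟨_, mem_image_of_mem _ hB,
    fun f hf => hosc f hf B hB x hxB _ (Classical.epsilon_spec ⟨x, hxB⟩)⟩

theorem FinEquicont.totallyBounded_image_ofFun (hE : FinEquicont E)
    (hpt : ∀ x, TotallyBounded ((fun f => f x) '' E)) :
    TotallyBounded (UniformFun.ofFun '' E : Set (X →ᵤ Y)) := by
  refine totallyBounded_iff_ultrafilter.2 fun 𝒰 h𝒰 => ?_
  refine (UniformFun.hasBasis_uniformity_of_basis X Y uniformity_basis_dist).cauchy_iff.2
    ⟨inferInstance, fun ε hε => ?_⟩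
  have hclose : ∀ t, ∃ A ∈ (𝒰 : Filter (X →ᵤ Y)), ∀ F ∈ A, ∀ G ∈ A,
      dist (UniformFun.toFun F t) (UniformFun.toFun G t) < ε / 3 := fun t => by
    have hmap : map (fun F : X →ᵤ Y => UniformFun.toFun F t) 𝒰 ≤ 𝓟 ((fun f => f t) '' E) := by
      simpa [image_image] using map_mono (m := fun F : X →ᵤ Y => UniformFun.toFun F t) h𝒰
    obtain ⟨s, hs, hsd⟩ := (Metric.cauchy_iff.1
      ((𝒰.map _).cauchy_of_totallyBounded (hpt t) hmap)).2 (ε / 3) (by positivity)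
    exact ⟨_, hs, fun F hF G hG => hsd _ hF _ hG⟩
  choose A hA hAdist using hclose
  obtain ⟨T, hT, hnet⟩ := hE.exists_finite_net (ε := ε / 3) (by positivity)
  refine ⟨(UniformFun.ofFun '' E) ∩ ⋂ t ∈ T, A t,
    inter_mem (le_principal_iff.1 h𝒰) ((biInter_mem hT).2 fun t _ => hA t), ?_⟩
  rintro _ ⟨⟨f, hf, rfl⟩, hfA⟩ _ ⟨⟨g, hg, rfl⟩, hgA⟩ x
  obtain ⟨t, ht, hxt⟩ := hnet x
  have hft := hAdist t _ (mem_iInter₂.1 hfA t ht) _ (mem_iInter₂.1 hgA t ht)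
  calc dist (f x) (g x) ≤ dist (f x) (f t) + dist (f t) (g t) + dist (g t) (g x) :=
        dist_triangle4 _ _ _ _
    _ < ε / 3 + ε / 3 + ε / 3 := by
        gcongr
        · exact hxt f hf
        · exact hft
        · rw [dist_comm]; exact hxt g hg
    _ = ε := by ring

end

theorem TotallyBounded.exists_subseq_tendsto {α : Type*} [UniformSpace α] [CompleteSpace α]
    [IsCountablyGenerated (uniformity α)] {u : ℕ → α} (hu : TotallyBounded (range u)) :
    ∃ a, ∃ φ : ℕ → ℕ, StrictMono φ ∧ Tendsto (u ∘ φ) atTop (𝓝 a) := by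
  obtain ⟨a, -, hφ⟩ := (hu.closure.isCompact_of_isClosed isClosed_closure).tendsto_subseq
    fun n => subset_closure (mem_range_self n)
  exact ⟨a, hφ⟩

theorem TendstoUniformly.upperSemicontinuous {X ι : Type*} [TopologicalSpace X] {l : Filter ι}
    [l.NeBot] {F : ι → X → ℝ} {g : X → ℝ} (hF : ∀ i, UpperSemicontinuous (F i))
    (hg : TendstoUniformly F g l) : UpperSemicontinuous g := by
  intro x y hxy
  set δ := (y - g x) / 3 with hδ
  obtain ⟨i, hi⟩ := (Metric.tendstoUniformly_iff.1 hg δ (by linarith)).exists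
  have hclose : ∀ z, |g z - F i z| < δ := fun z => by simpa [Real.dist_eq] using hi z
  filter_upwards [hF i x (g x + δ) (by linarith [(abs_lt.1 (hclose x)).1])] with z hz
  linarith [(abs_lt.1 (hclose z)).2]

theorem stmt12 {X : Type*} [TopologicalSpace X] [CompactSpace X]
    (f : ℕ → X → ℝ) (husc : ∀ n, UpperSemicontinuous (f n))
    (hub : ∃ M : ℝ, ∀ n, ∀ x, |f n x| ≤ M)
    (hfe : FinEquicont (Set.range f)) :
    ∃ φ : ℕ → ℕ, StrictMono φ ∧ ∃ g : X → ℝ, UpperSemicontinuous g ∧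
      TendstoUniformly (fun k => f (φ k)) g atTop := by
  obtain ⟨M, hM⟩ := hub
  have hpt : ∀ x, TotallyBounded ((fun h => h x) '' range f) := fun x =>
    isCompact_Icc.totallyBounded.subset <| by
      rintro _ ⟨_, ⟨n, rfl⟩, rfl⟩
      exact abs_le.1 (hM n x)
  have htb : TotallyBounded (range (UniformFun.ofFun ∘ f)) := by
    rw [range_comp]
    exact hfe.totallyBounded_image_ofFun hpt
  obtain ⟨g, φ, hφ, hlim⟩ := htb.exists_subseq_tendsto
  have hunif := UniformFun.tendsto_iff_tendstoUniformly.1 hlim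
  exact ⟨φ, hφ, _, hunif.upperSemicontinuous fun k => husc (φ k), hunif⟩
end
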